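/- arXiv:1509.04199 — 4 statements merged into one kernel-verified Lean document; each statement's English description precedes it below -/
import Mathlib

section
/- Let t ≥ 2 and d ≥ 2 be integers with d ≢ 1 (mod t). Then in the game i-Mark([1,t−1],{d}), the set of P-positions is exactly {qt : 0 ≤ q < d} ∪ {qt+1 : q ≥ d}. In particular the outcome sequence is eventually periodic with period t. -/
/-- The minimum excludant of a finite set of naturals. -/
noncomputable def mex (s : Finset ℕ) : ℕ := sInf {k : ℕ | k ∉ s}

/-- Options of the game i-Mark(S,D) from a heap of `n` tokens:
move to `n - s` for `s ∈ S` (with `1 ≤ s ≤ n`), or to `n / d` for `d ∈ D`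
(with `2 ≤ d` and `d ∣ n`, `n ≥ 1`). -/
def iMarkOptions (S D : Finset ℕ) (n : ℕ) : Finset ℕ :=
  ((S.filter (fun s => 1 ≤ s ∧ s ≤ n)).image (fun s => n - s)) ∪
  ((D.filter (fun d => 2 ≤ d ∧ d ∣ n ∧ 1 ≤ n)).image (fun d => n / d))

theorem iMarkOptions_lt {S D : Finset ℕ} {n m : ℕ} (h : m ∈ iMarkOptions S D n) : m < n := by
  simp only [iMarkOptions, Finset.mem_union, Finset.mem_image, Finset.mem_filter] at h
  rcases h with ⟨s, ⟨_, h1, h2⟩, rfl⟩ | ⟨d, ⟨_, h2, hd, hn⟩, rfl⟩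
  · omega
  · exact Nat.div_lt_self hn h2

/-- The Sprague-Grundy value of a heap of `n` tokens in the game i-Mark(S,D). -/
noncomputable def grundy (S D : Finset ℕ) (n : ℕ) : ℕ :=
  mex ((iMarkOptions S D n).attach.image (fun m => grundy S D m.1))
termination_by n
decreasing_by exact iMarkOptions_lt m.2

/-- `misereP S D n` means `n` is a P-position of i-Mark(S,D) under misère convention:
`n` has at least one option and every option is an N-position. -/
def misereP (S D : Finset ℕ) (n : ℕ) : Prop :=
  (iMarkOptions S D n).Nonempty ∧
    ∀ m : {x // x ∈ iMarkOptions S D n}, ¬ misereP S D m.1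
termination_by n
decreasing_by exact iMarkOptions_lt m.2

/-!
The claimed set `P` of P-positions is described by residue and quotient modulo `t`: `n ∈ P` iff
`n % t = 0` and `n / t < d`, or `n % t = 1` and `n / t ≥ d`. Distinct elements of `P` are at least
`t` apart, so no subtraction move joins two of them; a division move from `d * m` to `m` cannot
join two of them either, because `m ∈ P, m > 0` forces `(d * m) / t ≥ d`, while
`(d * m) % t` is `0` or `d % t ≠ 1`. Conversely every `n ∉ P` moves into `P` by subtracting its
residue (or one less), except `n = d * t`, which moves to `t` by division. Hence `P` is the kernel
of the game graph, i.e. the zero set of its Grundy function.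
-/

theorem mex_eq_zero_iff {s : Finset ℕ} : mex s = 0 ↔ 0 ∉ s := by
  obtain ⟨k, hk⟩ := Infinite.exists_notMem_finset s
  rw [mex, Nat.sInf_eq_zero, Set.eq_empty_iff_forall_notMem]
  exact ⟨fun h => h.resolve_right fun h' => h' k hk, Or.inl⟩

theorem grundy_eq_zero_iff {S D : Finset ℕ} {n : ℕ} :
    grundy S D n = 0 ↔ ∀ m ∈ iMarkOptions S D n, grundy S D m ≠ 0 := by
  rw [grundy, mex_eq_zero_iff]
  simp

theorem grundy_eq_zero_iff_of_forall_not {S D : Finset ℕ} {P : ℕ → Prop}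
    (hP : ∀ n, P n ↔ ∀ m ∈ iMarkOptions S D n, ¬ P m) (n : ℕ) : grundy S D n = 0 ↔ P n := by
  induction n using Nat.strong_induction_on with
  | _ n ih =>
    rw [grundy_eq_zero_iff, hP]
    exact forall₂_congr fun m hm => not_congr (ih m (iMarkOptions_lt hm))

theorem mem_iMarkOptions_Icc_singleton {k d n m : ℕ} :
    m ∈ iMarkOptions (Finset.Icc 1 k) {d} n ↔
      (m < n ∧ n ≤ m + k) ∨ (2 ≤ d ∧ 0 < m ∧ n = d * m) := by
  simp only [iMarkOptions, Finset.mem_union, Finset.mem_image, Finset.mem_filter,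
    Finset.mem_Icc, Finset.mem_singleton]
  constructor
  · rintro (⟨s, ⟨⟨hs1, hsk⟩, -, hsn⟩, rfl⟩ | ⟨d, ⟨rfl, hd, ⟨m, rfl⟩, hn⟩, rfl⟩)
    · omega
    · rw [Nat.mul_div_cancel_left m (by omega)]
      exact Or.inr ⟨hd, Nat.pos_of_mul_pos_left hn, rfl⟩
  · rintro (⟨hmn, hnm⟩ | ⟨hd, hm, rfl⟩)
    · exact Or.inl ⟨n - m, ⟨⟨by omega, by omega⟩, by omega, by omega⟩, by omega⟩
    · exact Or.inr ⟨d, ⟨rfl, hd, dvd_mul_right d m, Nat.mul_pos (by omega) hm⟩,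
        Nat.mul_div_cancel_left m (by omega)⟩

theorem Nat.add_div_mod_of_lt {m s t : ℕ} (hs : s < t) :
    ((m + s) / t = m / t ∧ (m + s) % t = m % t + s) ∨
      ((m + s) / t = m / t + 1 ∧ (m + s) % t + t = m % t + s) := by
  have ht : 0 < t := by omega
  rw [Nat.add_div ht, Nat.add_mod_eq_ite, Nat.div_eq_of_lt hs, Nat.mod_eq_of_lt hs]
  have := Nat.mod_lt m ht
  split_ifs <;> omega

def IsPPosition (t d n : ℕ) : Prop :=
  (n % t = 0 ∧ n / t < d) ∨ (n % t = 1 ∧ d ≤ n / t)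

section

variable {t d : ℕ}

theorem isPPosition_iff_exists (ht : 2 ≤ t) (n : ℕ) :
    IsPPosition t d n ↔ (∃ q, q < d ∧ n = q * t) ∨ (∃ q, d ≤ q ∧ n = q * t + 1) := by
  have hdecomp := Nat.div_add_mod n t
  constructor
  · rintro (⟨h0, hq⟩ | ⟨h1, hq⟩)
    · exact Or.inl ⟨n / t, hq, by rw [h0, Nat.mul_comm] at hdecomp; omega⟩
    · exact Or.inr ⟨n / t, hq, by rw [h1, Nat.mul_comm] at hdecomp; omega⟩
  · rintro (⟨q, hq, rfl⟩ | ⟨q, hq, rfl⟩)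
    · left
      simp [Nat.mul_div_cancel q (show 0 < t by omega), hq]
    · right
      rw [Nat.mul_comm, Nat.mul_add_mod, Nat.mul_add_div (by omega), Nat.mod_eq_of_lt ht,
        Nat.div_eq_of_lt ht]
      exact ⟨rfl, hq⟩

theorem IsPPosition.not_add {m s : ℕ} (hm : IsPPosition t d m) (hs : 0 < s) (hst : s < t) :
    ¬ IsPPosition t d (m + s) := by
  unfold IsPPosition at *
  rcases Nat.add_div_mod_of_lt (m := m) hst with h | h <;> omega

theorem IsPPosition.not_mul (hd : 2 ≤ d) (hdt : d % t ≠ 1) {m : ℕ} (hm : IsPPosition t d m)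
    (hm0 : 0 < m) : ¬ IsPPosition t d (d * m) := by
  have hquot : 1 ≤ m / t := by
    rcases hm with ⟨h0, -⟩ | ⟨-, hq⟩
    · have hdecomp := Nat.div_add_mod m t
      by_contra! hlt
      rw [Nat.lt_one_iff.mp hlt, h0, Nat.mul_zero] at hdecomp
      omega
    · omega
  have hge : d ≤ d * m / t :=
    (Nat.le_mul_of_pos_right d hquot).trans (Nat.mul_div_le_mul_div_assoc d m t)
  have hmod : d * m % t = d % t * (m % t) % t := Nat.mul_mod d m t
  rintro (⟨-, hlt⟩ | ⟨h1, -⟩)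
  · omega
  · rcases hm with ⟨h0, -⟩ | ⟨hm1, -⟩
    · rw [hmod, h0, Nat.mul_zero, Nat.zero_mod] at h1
      exact Nat.zero_ne_one h1
    · rw [hmod, hm1, Nat.mul_one, Nat.mod_mod] at h1
      exact hdt h1

theorem isPPosition_mul_add_iff {q r : ℕ} (hr : r < t) :
    IsPPosition t d (t * q + r) ↔ (r = 0 ∧ q < d) ∨ (r = 1 ∧ d ≤ q) := by
  rw [IsPPosition, Nat.mul_add_mod, Nat.mul_add_div (by omega), Nat.mod_eq_of_lt hr,
    Nat.div_eq_of_lt hr, Nat.add_zero]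

theorem exists_isPPosition_option (ht : 2 ≤ t) (hd : 2 ≤ d) {n : ℕ}
    (hn : ¬ IsPPosition t d n) :
    ∃ m, ((m < n ∧ n ≤ m + (t - 1)) ∨ (0 < m ∧ n = d * m)) ∧ IsPPosition t d m := by
  obtain ⟨q, r, hr, rfl⟩ : ∃ q r, r < t ∧ n = t * q + r :=
    ⟨n / t, n % t, Nat.mod_lt n (by omega), (Nat.div_add_mod n t).symm⟩
  rw [isPPosition_mul_add_iff hr] at hn
  have hP (q' r' : ℕ) (hr' : r' < t) := (isPPosition_mul_add_iff (d := d) (q := q') hr').mpr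
  rcases Nat.lt_or_ge q d with hqd | hqd
  · refine ⟨t * q + 0, Or.inl ⟨by omega, by omega⟩, hP q 0 (by omega) (Or.inl ⟨rfl, hqd⟩)⟩
  obtain hr1 | rfl : 2 ≤ r ∨ r = 0 := by omega
  · exact ⟨t * q + 1, Or.inl ⟨by omega, by omega⟩, hP q 1 (by omega) (Or.inr ⟨rfl, hqd⟩)⟩
  obtain rfl | ⟨q, rfl, hdq⟩ : q = d ∨ ∃ q', q = q' + 1 ∧ d ≤ q' := by
    rcases hqd.eq_or_lt with h | h
    · exact Or.inl h.symm
    · exact Or.inr ⟨q - 1, by omega, by omega⟩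
  · refine ⟨t * 1 + 0, Or.inr ⟨by omega, by rw [Nat.mul_comm]; simp⟩,
      hP 1 0 (by omega) (Or.inl ⟨rfl, by omega⟩)⟩
  · have hsplit : t * (q + 1) + 0 = (t * q + 1) + (t - 1) := by rw [Nat.mul_succ]; omega
    exact ⟨t * q + 1, Or.inl ⟨by omega, hsplit.le⟩, hP q 1 (by omega) (Or.inr ⟨rfl, hdq⟩)⟩

theorem isPPosition_iff_forall_not (ht : 2 ≤ t) (hd : 2 ≤ d) (hdt : d % t ≠ 1) (n : ℕ) :
    IsPPosition t d n ↔
      ∀ m ∈ iMarkOptions (Finset.Icc 1 (t - 1)) {d} n, ¬ IsPPosition t d m := by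
  simp only [mem_iMarkOptions_Icc_singleton]
  constructor
  · rintro hn m (⟨hmn, hnm⟩ | ⟨-, hm0, rfl⟩) hm
    · obtain ⟨s, rfl⟩ := Nat.exists_eq_add_of_lt hmn
      exact hm.not_add (s := s + 1) (by omega) (by omega) hn
    · exact hm.not_mul hd hdt hm0 hn
  · intro hall
    by_contra hn
    obtain ⟨m, hopt, hm⟩ := exists_isPPosition_option ht hd hn
    exact hall m (hopt.imp id fun h => ⟨hd, h⟩) hm

end

/-- P-positions of i-Mark([1,t-1],{d}) when d ≢ 1 (mod t). -/
theorem iMark_t_d_Ppositions (t d : ℕ) (ht : 2 ≤ t) (hd : 2 ≤ d) (h : d % t ≠ 1) :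
    ∀ n : ℕ, grundy (Finset.Icc 1 (t - 1)) {d} n = 0 ↔
      ((∃ q : ℕ, q < d ∧ n = q * t) ∨ (∃ q : ℕ, d ≤ q ∧ n = q * t + 1)) := fun n =>
  (grundy_eq_zero_iff_of_forall_not (isPPosition_iff_forall_not ht hd h) n).trans
    (isPPosition_iff_exists ht n)
end

section
/- Let t ≥ 2. In the game i-Mark([1,t−1],{t}), writing n = qt + r with 0 ≤ r ≤ t−1: (i) if (q < t and r = 0) or (q ≥ t and r = 1) then g(n) = 0; (ii) if q < t and r ≠ 0 then g(n) = r; (iii) if q ≥ t and r > 1 then g(n) = r − 1; (iv) if q ≥ t and r = 0 then g(n) ∈ {t−1, t}. -/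
/-! Write `n = q * t + r` with `r < t` and call `{q * t, …, q * t + t - 1}` block `q`. Below
`t * t` the value is the residue `r`: subtraction reaches every smaller residue and never `r`
itself, and the only division move, `q * t ↦ q`, lands on the nonzero residue `q`.
From `t * t` on, block `q + 1` is determined by block `q` and by `g (q + 1)`. Subtraction from
`(q + 1) * t` reaches the values `0, …, t - 2` (from `t * t`: `1, …, t - 1`) and the division
move adds the single value `g (q + 1)`, so `g ((q + 1) * t) ∈ {t - 1, t}`. For `r > 0`, the value
`r - 1` is then missed by every option of `(q + 1) * t + r`: those in block `q` have values
`≥ r`, and `g ((q + 1) * t) ≥ t - 1`. -/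

open Finset

theorem mex_eq_of_forall_lt_mem {s : Finset ℕ} {k : ℕ} (hk : k ∉ s) (hlt : ∀ j < k, j ∈ s) :
    mex s = k := by
  refine le_antisymm (Nat.sInf_le hk) (le_of_not_gt fun h => ?_)
  exact Nat.sInf_mem (s := {j | j ∉ s}) ⟨k, hk⟩ (hlt _ h)

theorem mex_eq_or_eq_succ {s : Finset ℕ} {k : ℕ} (hlt : ∀ j < k, j ∈ s) (hk : k ∈ s → k + 1 ∉ s) :
    mex s = k ∨ mex s = k + 1 := by
  by_cases h : k ∈ s
  · exact Or.inr (mex_eq_of_forall_lt_mem (hk h) fun j hj => by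
      rcases Nat.lt_succ_iff_lt_or_eq.1 hj with hj | rfl
      exacts [hlt j hj, h])
  · exact Or.inl (mex_eq_of_forall_lt_mem h hlt)

section Grundy

variable {S D : Finset ℕ} {n k : ℕ}

theorem grundy_eq_mex_image :
    grundy S D n = mex ((iMarkOptions S D n).image (grundy S D)) := by
  rw [grundy]
  congr 1
  ext j
  simp

theorem grundy_eq_of_forall (hk : ∀ m ∈ iMarkOptions S D n, grundy S D m ≠ k)
    (hlt : ∀ j < k, ∃ m ∈ iMarkOptions S D n, grundy S D m = j) : grundy S D n = k := by
  rw [grundy_eq_mex_image]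
  exact mex_eq_of_forall_lt_mem (by simpa using hk) (by simpa using hlt)

theorem grundy_eq_or_eq_succ (hlt : ∀ j < k, ∃ m ∈ iMarkOptions S D n, grundy S D m = j)
    (hk : (∃ m ∈ iMarkOptions S D n, grundy S D m = k) →
      ∀ m ∈ iMarkOptions S D n, grundy S D m ≠ k + 1) :
    grundy S D n = k ∨ grundy S D n = k + 1 := by
  rw [grundy_eq_mex_image]
  exact mex_eq_or_eq_succ (by simpa using hlt) (by simpa using hk)

end Grundy

section SubtractOrDivide

variable {t : ℕ}

local notation "𝒪" => iMarkOptions (Icc 1 (t - 1)) (singleton t : Finset ℕ)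
local notation "𝒢" => grundy (Icc 1 (t - 1)) (singleton t : Finset ℕ)

theorem mem_iMarkOptions_mul_add (ht : 2 ≤ t) {q r m : ℕ} (hr : r < t) :
    m ∈ 𝒪 (q * t + r) ↔
      (∃ s, 1 ≤ s ∧ s < t ∧ s ≤ q * t + r ∧ m = q * t + r - s) ∨ (r = 0 ∧ 1 ≤ q ∧ m = q) := by
  have hdiv : q * t / t = q := Nat.mul_div_cancel q (by omega)
  have hdvd : t ∣ q * t + r ↔ r = 0 := by
    rw [Nat.dvd_add_right (dvd_mul_left t q)]
    exact ⟨fun h => Nat.eq_zero_of_dvd_of_lt h hr, fun h => h ▸ dvd_zero t⟩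
  simp only [iMarkOptions, mem_union, mem_image, mem_filter, mem_Icc, mem_singleton]
  constructor
  · rintro (⟨s, ⟨⟨hs1, hst⟩, -, hsn⟩, rfl⟩ | ⟨d, ⟨rfl, -, hd, hn⟩, rfl⟩)
    · exact Or.inl ⟨s, hs1, by omega, hsn, rfl⟩
    · obtain rfl := hdvd.1 hd
      refine Or.inr ⟨rfl, Nat.pos_of_ne_zero ?_, hdiv⟩
      rintro rfl
      simp at hn
  · rintro (⟨s, hs1, hst, hsn, rfl⟩ | ⟨rfl, hq, rfl⟩)
    · exact Or.inl ⟨s, ⟨⟨hs1, by omega⟩, hs1, hsn⟩, rfl⟩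
    · exact Or.inr ⟨t, ⟨rfl, ht, by simp, Nat.mul_pos hq (by omega)⟩, hdiv⟩

theorem grundy_mul_add_of_lt (ht : 2 ≤ t) {q r : ℕ} (hq : q < t) (hr : r < t) :
    𝒢 (q * t + r) = r := by
  induction h : q * t + r using Nat.strong_induction_on generalizing q r with
  | _ n ih =>
  subst h
  have ih' {q' r' : ℕ} (hq' : q' < t) (hr' : r' < t) (hlt : q' * t + r' < q * t + r) :
      𝒢 (q' * t + r') = r' := ih _ hlt hq' hr' rfl
  apply grundy_eq_of_forall
  · intro m hm
    rcases (mem_iMarkOptions_mul_add ht hr).1 hm with ⟨s, hs1, hst, hsn, rfl⟩ | ⟨rfl, hq1, rfl⟩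
    · rcases le_or_gt s r with hsr | hrs
      · rw [show q * t + r - s = q * t + (r - s) by omega, ih' hq (by omega) (by omega)]
        omega
      · obtain ⟨p, rfl⟩ : ∃ p, q = p + 1 := Nat.exists_eq_add_one_of_ne_zero <| by
          rintro rfl
          omega
        have hmul : (p + 1) * t = p * t + t := add_one_mul p t
        rw [show (p + 1) * t + r - s = p * t + (t + r - s) by omega,
          ih' (by omega) (by omega) (by omega)]
        omega
    · rw [show m = 0 * t + m by simp, ih' (by omega) hq (by nlinarith)]
      omega
  · intro j hj
    refine ⟨q * t + r - (r - j), (mem_iMarkOptions_mul_add ht hr).2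
      (Or.inl ⟨r - j, by omega, by omega, by omega, rfl⟩), ?_⟩
    rw [show q * t + r - (r - j) = q * t + j by omega, ih' hq (by omega) (by omega)]

theorem grundy_mul_self (ht : 2 ≤ t) : 𝒢 (t * t) = t := by
  have hopt (m : ℕ) := mem_iMarkOptions_mul_add ht (q := t) (r := 0) (m := m) (by omega)
  simp only [add_zero] at hopt
  have hmul : t * t = (t - 1) * t + t := by
    rw [Nat.sub_one_mul]
    have := Nat.le_mul_self t
    omega
  have hsub {s : ℕ} (hs1 : 1 ≤ s) (hst : s < t) : 𝒢 (t * t - s) = t - s := by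
    rw [show t * t - s = (t - 1) * t + (t - s) by omega]
    exact grundy_mul_add_of_lt ht (by omega) (by omega)
  have hdiv : 𝒢 t = 0 := by
    simpa using grundy_mul_add_of_lt ht (q := 1) (r := 0) (by omega) (by omega)
  apply grundy_eq_of_forall
  · intro m hm
    rcases (hopt _).1 hm with ⟨s, hs1, hst, -, rfl⟩ | ⟨-, -, rfl⟩
    · rw [hsub hs1 hst]
      omega
    · omega
  · intro j hj
    rcases Nat.eq_zero_or_pos j with rfl | hj0
    · exact ⟨t, (hopt _).2 (Or.inr ⟨trivial, by omega, rfl⟩), hdiv⟩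
    · refine ⟨t * t - (t - j), (hopt _).2 (Or.inl ⟨t - j, by omega, by omega, by omega, rfl⟩), ?_⟩
      rw [hsub (by omega) (by omega)]
      omega

theorem grundy_succ_mul_add (ht : 2 ≤ t) {q : ℕ} (hzero : t - 1 ≤ 𝒢 ((q + 1) * t))
    (hprev : ∀ r, 0 < r → r < t → r - 1 ≤ 𝒢 (q * t + r)) {r : ℕ} (hr0 : 0 < r) (hr : r < t) :
    𝒢 ((q + 1) * t + r) = r - 1 := by
  induction r using Nat.strong_induction_on with
  | _ r ih =>
  have hmul : (q + 1) * t = q * t + t := add_one_mul q t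
  apply grundy_eq_of_forall
  · intro m hm
    rcases (mem_iMarkOptions_mul_add ht hr).1 hm with ⟨s, hs1, hst, hsn, rfl⟩ | ⟨rfl, -, -⟩
    · rcases lt_trichotomy s r with hsr | rfl | hrs
      · rw [show (q + 1) * t + r - s = (q + 1) * t + (r - s) by omega,
          ih (r - s) (by omega) (by omega) (by omega)]
        omega
      · rw [Nat.add_sub_cancel]
        omega
      · have := hprev (t + r - s) (by omega) (by omega)
        rw [show (q + 1) * t + r - s = q * t + (t + r - s) by omega]
        omega
    · omega
  · intro j hj
    refine ⟨(q + 1) * t + r - (r - 1 - j), (mem_iMarkOptions_mul_add ht hr).2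
      (Or.inl ⟨r - 1 - j, by omega, by omega, by omega, rfl⟩), ?_⟩
    rw [show (q + 1) * t + r - (r - 1 - j) = (q + 1) * t + (j + 1) by omega,
      ih (j + 1) (by omega) (by omega) (by omega)]
    omega

theorem grundy_succ_mul (ht : 2 ≤ t) {q : ℕ}
    (hblock : ∀ r, 0 < r → r < t → 𝒢 (q * t + r) = r - 1) :
    𝒢 ((q + 1) * t) = t - 1 ∨ 𝒢 ((q + 1) * t) = t := by
  have hopt (m : ℕ) := mem_iMarkOptions_mul_add ht (q := q + 1) (r := 0) (m := m) (by omega)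
  simp only [add_zero] at hopt
  have hmul : (q + 1) * t = q * t + t := add_one_mul q t
  have hsub {s : ℕ} (hs1 : 1 ≤ s) (hst : s < t) : 𝒢 ((q + 1) * t - s) = t - s - 1 := by
    rw [show (q + 1) * t - s = q * t + (t - s) by omega]
    exact hblock _ (by omega) (by omega)
  have hval : ∀ m ∈ 𝒪 ((q + 1) * t), 𝒢 m < t - 1 ∨ m = q + 1 := by
    intro m hm
    rcases (hopt _).1 hm with ⟨s, hs1, hst, -, rfl⟩ | ⟨-, -, rfl⟩
    · rw [hsub hs1 hst]
      omega
    · exact Or.inr rfl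
  refine (grundy_eq_or_eq_succ (k := t - 1) ?_ ?_).imp id fun h => h.trans (by omega)
  · intro j hj
    refine ⟨(q + 1) * t - (t - 1 - j), (hopt _).2 (Or.inl ⟨t - 1 - j, by omega, by omega, by omega,
      rfl⟩), ?_⟩
    rw [hsub (by omega) (by omega)]
    omega
  · rintro ⟨m₀, hm₀, hv₀⟩ m hm hv
    rcases hval m₀ hm₀ with h | rfl
    · omega
    rcases hval m hm with h | rfl <;> omega

theorem grundy_mul_add_of_le (ht : 2 ≤ t) {q : ℕ} (hq : t ≤ q) :
    (𝒢 (q * t) = t - 1 ∨ 𝒢 (q * t) = t) ∧ ∀ r, 0 < r → r < t → 𝒢 (q * t + r) = r - 1 := by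
  induction q, hq using Nat.le_induction with
  | base =>
    refine ⟨Or.inr (grundy_mul_self ht), fun r hr0 hr => ?_⟩
    have := grundy_succ_mul_add ht (q := t - 1) ?_ ?_ hr0 hr
    · rwa [Nat.sub_add_cancel (by omega)] at this
    · rw [Nat.sub_add_cancel (by omega), grundy_mul_self ht]
      omega
    · intro r' _ hr'
      rw [grundy_mul_add_of_lt ht (by omega) hr']
      omega
  | succ q _ ih =>
    obtain ⟨-, hblock⟩ := ih
    have hzero := grundy_succ_mul ht hblock
    exact ⟨hzero, fun r hr0 hr => grundy_succ_mul_add ht (by omega)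
      (fun r' h₀ h₁ => (hblock r' h₀ h₁).ge) hr0 hr⟩

end SubtractOrDivide

/-- Sprague-Grundy values of i-Mark([1,t-1],{t}). -/
theorem iMark_t_t_grundy (t : ℕ) (ht : 2 ≤ t) (n q r : ℕ) (hn : n = q * t + r) (hr : r < t) :
    (((q < t ∧ r = 0) ∨ (t ≤ q ∧ r = 1)) → grundy (Finset.Icc 1 (t - 1)) {t} n = 0) ∧
    ((q < t ∧ r ≠ 0) → grundy (Finset.Icc 1 (t - 1)) {t} n = r) ∧
    ((t ≤ q ∧ 1 < r) → grundy (Finset.Icc 1 (t - 1)) {t} n = r - 1) ∧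
    ((t ≤ q ∧ r = 0) →
      grundy (Finset.Icc 1 (t - 1)) {t} n = t - 1 ∨ grundy (Finset.Icc 1 (t - 1)) {t} n = t) := by
  subst hn
  rcases lt_or_ge q t with hq | hq
  · have := grundy_mul_add_of_lt ht hq hr
    omega
  · obtain ⟨hzero, hblock⟩ := grundy_mul_add_of_le ht hq
    rcases Nat.eq_zero_or_pos r with rfl | hr0
    · simp only [add_zero]
      omega
    · have := hblock r hr0 hr
      omega
end

section
/- In the game i-Mark([1,2],{2}), for any position n = 3q with q ≥ 6, g(n) = 3 if and only if q is even and either: the odd part of q is 1 or 5 and the 2-adic valuation of q is even, or the odd part of q is neither 1 nor 5 and the 2-adic valuation of q is odd. -/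
/-!
By strong induction, the zeros of `g` are `0`, `3` and the positions `n ≡ 1 (mod 3)` with
`n ≥ 7`, and `g = 1` exactly at `1, 4, 9, 12, 15` and at the positions `n ≡ 2 (mod 3)` with
`n ≥ 20`: these sets satisfy the mex recursion. So from `21` on a multiple of three sees the
values `1` and `0` at `n - 1` and `n - 2`, whence `g(3q) = 2` for odd `q` and `g(6k) = 3` exactly
when `g(3k) = 2`. The value `3` thus alternates along each chain `q, 2q, 4q, …`. The chains start
with `g(18) = 3` and `g(6m) = 3` for odd `m ≥ 7`, but with `g(24) = g(30) = 2` because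
`g(12) = g(15) = 1`; this makes the odd parts `1` and `5` exceptional.
-/

theorem mex_eq_iff {s : Finset ℕ} {k : ℕ} : mex s = k ↔ k ∉ s ∧ ∀ j < k, j ∈ s := by
  constructor
  · rintro rfl
    exact ⟨Nat.sInf_mem (Infinite.exists_notMem_finset s),
      fun j hj => not_not.mp (Nat.notMem_of_lt_sInf hj)⟩
  · rintro ⟨hk, hlt⟩
    refine le_antisymm (Nat.sInf_le hk) (not_lt.mp fun h => ?_)
    exact Nat.sInf_mem (s := {k : ℕ | k ∉ s}) ⟨k, hk⟩ (hlt _ h)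

theorem grundy_eq_mex (S D : Finset ℕ) (n : ℕ) :
    grundy S D n = mex ((iMarkOptions S D n).image (grundy S D)) := by
  rw [grundy]
  conv_rhs => rw [← Finset.attach_image_val (s := iMarkOptions S D n), Finset.image_image]
  rfl

theorem grundy_eq_iff {S D : Finset ℕ} {n k : ℕ} :
    grundy S D n = k ↔ (∀ m ∈ iMarkOptions S D n, grundy S D m ≠ k) ∧
      ∀ j < k, ∃ m ∈ iMarkOptions S D n, grundy S D m = j := by
  rw [grundy_eq_mex, mex_eq_iff]
  simp

theorem mem_iMarkOptions_one_two_two {n m : ℕ} (hn : 1 ≤ n) :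
    m ∈ iMarkOptions {1, 2} {2} n ↔ m = n - 1 ∨ m = n - 2 ∨ (2 ∣ n ∧ m = n / 2) := by
  simp only [iMarkOptions, Finset.mem_union, Finset.mem_image, Finset.mem_filter,
    Finset.mem_insert, Finset.mem_singleton]
  constructor
  · rintro (⟨s, ⟨rfl | rfl, -⟩, rfl⟩ | ⟨d, ⟨rfl, -, hdvd, -⟩, rfl⟩) <;> omega
  · rintro (rfl | rfl | ⟨hdvd, rfl⟩)
    · exact Or.inl ⟨1, ⟨Or.inl rfl, le_rfl, hn⟩, rfl⟩
    · by_cases h : n = 1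
      · exact Or.inl ⟨1, ⟨Or.inl rfl, le_rfl, hn⟩, by omega⟩
      · exact Or.inl ⟨2, ⟨Or.inr rfl, by omega⟩, rfl⟩
    · exact Or.inr ⟨2, ⟨rfl, le_rfl, hdvd, hn⟩, rfl⟩

local notation "𝒢" => grundy {1, 2} {2}

theorem grundy_one_two_two_eq_iff {n k : ℕ} (hn : 1 ≤ n) :
    𝒢 n = k ↔ (𝒢 (n - 1) ≠ k ∧ 𝒢 (n - 2) ≠ k ∧ (2 ∣ n → 𝒢 (n / 2) ≠ k)) ∧
      ∀ j < k, 𝒢 (n - 1) = j ∨ 𝒢 (n - 2) = j ∨ (2 ∣ n ∧ 𝒢 (n / 2) = j) := by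
  rw [grundy_eq_iff]
  simp [mem_iMarkOptions_one_two_two hn, or_imp, forall_and, or_and_right, exists_or, and_assoc]

theorem grundy_one_two_two_zero : 𝒢 0 = 0 :=
  grundy_eq_iff.2 ⟨by decide, by simp⟩

theorem grundy_one_two_two_eq_zero_iff (n : ℕ) :
    𝒢 n = 0 ↔ n = 0 ∨ n = 3 ∨ (n % 3 = 1 ∧ 7 ≤ n) := by
  induction n using Nat.strong_induction_on with
  | _ n ih =>
  obtain rfl | hn := Nat.eq_zero_or_pos n
  · simp [grundy_one_two_two_zero]
  simp only [grundy_one_two_two_eq_iff hn, ne_eq, ih (n - 1) (by omega), ih (n - 2) (by omega),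
    ih (n / 2) (by omega), Nat.not_lt_zero, IsEmpty.forall_iff, implies_true, and_true]
  omega

theorem grundy_one_two_two_eq_one_iff (n : ℕ) :
    𝒢 n = 1 ↔ n = 1 ∨ n = 4 ∨ n = 9 ∨ n = 12 ∨ n = 15 ∨ (n % 3 = 2 ∧ 20 ≤ n) := by
  induction n using Nat.strong_induction_on with
  | _ n ih =>
  obtain rfl | hn := Nat.eq_zero_or_pos n
  · simp [grundy_one_two_two_zero]
  simp only [grundy_one_two_two_eq_iff hn, ne_eq, ih (n - 1) (by omega), ih (n - 2) (by omega),
    ih (n / 2) (by omega), Nat.lt_one_iff, forall_eq, grundy_one_two_two_eq_zero_iff]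
  omega

theorem grundy_one_two_two_three_mul_of_odd {q : ℕ} (hq : Odd q) (h7 : 7 ≤ q) : 𝒢 (3 * q) = 2 := by
  have h1 : 𝒢 (3 * q - 1) = 1 := (grundy_one_two_two_eq_one_iff _).2 (by omega)
  have h0 : 𝒢 (3 * q - 2) = 0 := (grundy_one_two_two_eq_zero_iff _).2 (by omega)
  have hodd : ¬ 2 ∣ 3 * q := by obtain ⟨r, rfl⟩ := hq; omega
  rw [grundy_one_two_two_eq_iff (by omega), h1, h0]
  simp [hodd]
  omega

theorem grundy_one_two_two_six_mul {k : ℕ} (hk : 4 ≤ k) :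
    𝒢 (6 * k) = if 𝒢 (3 * k) = 2 then 3 else 2 := by
  have h1 : 𝒢 (6 * k - 1) = 1 := (grundy_one_two_two_eq_one_iff _).2 (by omega)
  have h0 : 𝒢 (6 * k - 2) = 0 := (grundy_one_two_two_eq_zero_iff _).2 (by omega)
  have hhalf : 6 * k / 2 = 3 * k := by omega
  rw [grundy_one_two_two_eq_iff (by omega), h1, h0, hhalf]
  split_ifs with h <;> simp [h] <;> omega

theorem grundy_one_two_two_eighteen : 𝒢 18 = 3 := by
  have h17 : 𝒢 17 = 2 := by
    rw [grundy_one_two_two_eq_iff (by norm_num)]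
    simp [(grundy_one_two_two_eq_zero_iff 16).2 (by norm_num),
      (grundy_one_two_two_eq_one_iff 15).2 (by norm_num)]
    omega
  rw [grundy_one_two_two_eq_iff (by norm_num)]
  simp [h17, (grundy_one_two_two_eq_zero_iff 16).2 (by norm_num),
    (grundy_one_two_two_eq_one_iff 9).2 (by norm_num)]
  omega

theorem grundy_one_two_two_three_mul_eq_two_or_three {q : ℕ} (hq : 6 ≤ q) :
    𝒢 (3 * q) = 2 ∨ 𝒢 (3 * q) = 3 := by
  obtain rfl | h7 := hq.eq_or_lt
  · exact Or.inr grundy_one_two_two_eighteen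
  obtain ⟨k, rfl⟩ | hodd := Nat.even_or_odd q
  · rw [← two_mul, show 3 * (2 * k) = 6 * k by ring, grundy_one_two_two_six_mul (by omega)]
    split_ifs <;> simp
  · exact Or.inl (grundy_one_two_two_three_mul_of_odd hodd h7)

def ThreeCriterion (q : ℕ) : Prop :=
  Even q ∧ (((ordCompl[2] q = 1 ∨ ordCompl[2] q = 5) ∧ Even (padicValNat 2 q)) ∨
    ((ordCompl[2] q ≠ 1 ∧ ordCompl[2] q ≠ 5) ∧ Odd (padicValNat 2 q)))

theorem threeCriterion_two_pow_mul {v m : ℕ} (hm : Odd m) :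
    ThreeCriterion (2 ^ v * m) ↔ v ≠ 0 ∧ ((m = 1 ∨ m = 5) ↔ Even v) := by
  have hm2 : ¬ 2 ∣ m := by rwa [← even_iff_two_dvd, Nat.not_even_iff_odd]
  have hcompl : ordCompl[2] (2 ^ v * m) = m := Nat.ordCompl_pow_mul_of_not_dvd v Nat.prime_two hm2
  have hval : padicValNat 2 (2 ^ v * m) = v := by
    rw [padicValNat.mul (by positivity) hm.pos.ne', padicValNat.prime_pow,
      padicValNat.eq_zero_of_not_dvd hm2, add_zero]
  have heven : Even (2 ^ v * m) ↔ v ≠ 0 := by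
    simp [Nat.even_mul, Nat.even_pow, Nat.not_even_iff_odd.2 hm]
  rw [ThreeCriterion, hcompl, hval, heven, ← Nat.not_even_iff_odd]
  tauto

theorem threeCriterion_two_mul {k : ℕ} (h0 : k ≠ 0) (h1 : k ≠ 1) (h5 : k ≠ 5) :
    ThreeCriterion (2 * k) ↔ ¬ ThreeCriterion k := by
  obtain ⟨v, m, hm, rfl⟩ := Nat.exists_eq_two_pow_mul_odd h0
  rw [← mul_assoc, ← pow_succ', threeCriterion_two_pow_mul hm, threeCriterion_two_pow_mul hm,
    Nat.even_add_one]
  obtain rfl | hv := eq_or_ne v 0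
  · simp_all
  · tauto

theorem threeCriterion_of_odd {q : ℕ} (hq : Odd q) : ¬ ThreeCriterion q :=
  fun h => Nat.not_even_iff_odd.2 hq h.1

/-- Characterization of positions of g-value 3 in i-Mark([1,2],{2}). -/
theorem iMark_12_2_grundy_eq_three (q : ℕ) (hq : 6 ≤ q) :
    grundy {1, 2} {2} (3 * q) = 3 ↔ Even q ∧
      (((ordCompl[2] q = 1 ∨ ordCompl[2] q = 5) ∧ Even (padicValNat 2 q)) ∨
       ((ordCompl[2] q ≠ 1 ∧ ordCompl[2] q ≠ 5) ∧ Odd (padicValNat 2 q))) := by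
  change 𝒢 (3 * q) = 3 ↔ ThreeCriterion q
  induction q using Nat.strong_induction_on with
  | _ q ih =>
  obtain rfl | h7 := hq.eq_or_lt
  · simpa [grundy_one_two_two_eighteen] using
      (threeCriterion_two_pow_mul (v := 1) (m := 3) (by decide)).2 (by decide)
  obtain ⟨k, rfl⟩ | hodd := Nat.even_or_odd q
  · rw [← two_mul, show 3 * (2 * k) = 6 * k by ring, grundy_one_two_two_six_mul (by omega)]
    obtain hk | hk := lt_or_ge k 6
    · have h1 : 𝒢 (3 * k) = 1 := (grundy_one_two_two_eq_one_iff _).2 (by omega)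
      have hcrit : ¬ ThreeCriterion (2 * k) := by
        obtain rfl | rfl : k = 4 ∨ k = 5 := by omega
        · simpa using (threeCriterion_two_pow_mul (v := 3) odd_one).not.2 (by decide)
        · simpa using (threeCriterion_two_pow_mul (v := 1) (m := 5) (by decide)).not.2 (by decide)
      simp [h1, hcrit]
    · rw [threeCriterion_two_mul (by omega) (by omega) (by omega), ← ih k (by omega) hk]
      rcases grundy_one_two_two_three_mul_eq_two_or_three hk with h | h <;> simp [h]
  · simp [grundy_one_two_two_three_mul_of_odd hodd h7, threeCriterion_of_odd hodd]
end

section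
/- In the misère game i-MiMark({2,4},{2}), a position n is a P-position if and only if n ≡ 2 (mod 6) or n ≡ 3 (mod 6). -/
theorem misereP_iff {S D : Finset ℕ} {n : ℕ} :
    misereP S D n ↔
      (iMarkOptions S D n).Nonempty ∧ ∀ m ∈ iMarkOptions S D n, ¬ misereP S D m := by
  rw [misereP, Subtype.forall]

theorem misereP_iff_of_forall_iff {S D : Finset ℕ} {p : ℕ → Prop}
    (hp : ∀ n, p n ↔ (iMarkOptions S D n).Nonempty ∧ ∀ m ∈ iMarkOptions S D n, ¬ p m)
    (n : ℕ) : misereP S D n ↔ p n := by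
  induction n using Nat.strong_induction_on with
  | _ n ih =>
    rw [misereP_iff, hp]
    refine and_congr_right fun _ => forall₂_congr fun m hm => ?_
    rw [ih m (iMarkOptions_lt hm)]

theorem mem_iMarkOptions_24_2 {n m : ℕ} :
    m ∈ iMarkOptions {2, 4} {2} n ↔
      (2 ≤ n ∧ m = n - 2) ∨ (4 ≤ n ∧ m = n - 4) ∨ (2 ∣ n ∧ 0 < n ∧ m = n / 2) := by
  simp only [iMarkOptions, Finset.mem_union, Finset.mem_image, Finset.mem_filter,
    Finset.mem_insert, Finset.mem_singleton]
  constructor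
  · rintro (⟨s, ⟨rfl | rfl, -, hs⟩, rfl⟩ | ⟨d, ⟨rfl, -, hd, hn⟩, rfl⟩)
    · exact Or.inl ⟨hs, rfl⟩
    · exact Or.inr (Or.inl ⟨hs, rfl⟩)
    · exact Or.inr (Or.inr ⟨hd, hn, rfl⟩)
  · rintro (⟨h, rfl⟩ | ⟨h, rfl⟩ | ⟨hd, hn, rfl⟩)
    · exact Or.inl ⟨2, ⟨Or.inl rfl, by omega, h⟩, rfl⟩
    · exact Or.inl ⟨4, ⟨Or.inr rfl, by omega, h⟩, rfl⟩
    · exact Or.inr ⟨2, ⟨rfl, le_rfl, hd, hn⟩, rfl⟩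

theorem iMarkOptions_24_2_nonempty_iff {n : ℕ} :
    (iMarkOptions {2, 4} {2} n).Nonempty ↔ 2 ≤ n := by
  simp only [Finset.Nonempty, mem_iMarkOptions_24_2]
  constructor
  · rintro ⟨m, hm⟩
    omega
  · exact fun h => ⟨n - 2, Or.inl ⟨h, rfl⟩⟩

theorem forall_mem_iMarkOptions_24_2 {n : ℕ} {q : ℕ → Prop} :
    (∀ m ∈ iMarkOptions {2, 4} {2} n, q m) ↔
      (2 ≤ n → q (n - 2)) ∧ (4 ≤ n → q (n - 4)) ∧ (2 ∣ n → 0 < n → q (n / 2)) := by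
  simp only [mem_iMarkOptions_24_2]
  constructor
  · intro h
    exact ⟨fun h2 => h _ (Or.inl ⟨h2, rfl⟩), fun h4 => h _ (Or.inr (Or.inl ⟨h4, rfl⟩)),
      fun hd hn => h _ (Or.inr (Or.inr ⟨hd, hn, rfl⟩))⟩
  · rintro ⟨h2, h4, hd⟩ m (⟨hn, rfl⟩ | ⟨hn, rfl⟩ | ⟨hdn, hn, rfl⟩)
    exacts [h2 hn, h4 hn, hd hdn hn]

/-- P-positions of the misère game i-MiMark({2,4},{2}). -/
theorem iMiMark_24_2_Ppositions (n : ℕ) :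
    misereP {2, 4} {2} n ↔ n % 6 = 2 ∨ n % 6 = 3 := by
  refine misereP_iff_of_forall_iff (p := fun k => k % 6 = 2 ∨ k % 6 = 3) (fun k => ?_) n
  rw [iMarkOptions_24_2_nonempty_iff, forall_mem_iMarkOptions_24_2]
  omega
end
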